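/- arXiv:2111.02166 — 5 statements merged into one kernel-verified Lean document; each statement's English description precedes it below -/
import Mathlib

section
/- Let E be an effect algebra, P ⊆ E a sub-effect algebra, and (J_p)_{p∈P} a family of compressions on E such that J_p(1) = p for every p ∈ P. Then P, with the restricted partial operation and orthosupplementation, is an orthomodular poset — in particular, whenever p, q ∈ P and p⊕q is defined, p⊕q is the supremum p∨q of p and q in P — and for every p ∈ P the compression J_{p'} is a supplement of J_p. -/
/- Common definitions: effect algebras, compression bases, spectrality -/

attribute [local instance 0] Classical.propDecidable

universe u

structure EffectAlgebra (E : Type u) where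
  padd : E → E → Option E
  zero : E
  one : E
  comm : ∀ a b, padd a b = padd b a
  assoc : ∀ a b c ab abc, padd a b = some ab → padd ab c = some abc →
      ∃ bc, padd b c = some bc ∧ padd a bc = some abc
  orth_exists : ∀ a, ∃ x, padd a x = some one
  orth_unique : ∀ a x y, padd a x = some one → padd a y = some one → x = y
  add_one : ∀ a b, padd a one = some b → a = zero

namespace EffectAlgebra

variable {E : Type u} (EA : EffectAlgebra E)

/-- `a ⊥ b` and `a ⊕ b = c`. -/
def le (a b : E) : Prop := ∃ c, EA.padd a c = some b

/-- the orthosupplement `a'`. -/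
noncomputable def compl (a : E) : E := (EA.orth_exists a).choose

/-- `b ⊖ a` (the element `c` with `a ⊕ c = b`, when it exists). -/
noncomputable def osub (b a : E) : E :=
  if h : ∃ c, EA.padd a c = some b then h.choose else EA.zero

/-- the value of `a ⊕ b` (defaulting to `0` when undefined). -/
noncomputable def oplusD (a b : E) : E := (EA.padd a b).getD EA.zero

def IsSharp (a : E) : Prop := ∀ x, EA.le x a → EA.le x (EA.compl a) → x = EA.zero

/-- sub-effect algebra. -/
def SubEA (P : Set E) : Prop :=
  EA.zero ∈ P ∧ EA.one ∈ P ∧ (∀ a ∈ P, EA.compl a ∈ P) ∧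
    ∀ a ∈ P, ∀ b ∈ P, ∀ c, EA.padd a b = some c → c ∈ P

/-- Mackey compatibility: `a = a₁ ⊕ c`, `b = b₁ ⊕ c` with `a₁ ⊕ b₁ ⊕ c` defined. -/
def Mackey (a b : E) : Prop :=
  ∃ a1 b1 c d e, EA.padd a1 b1 = some d ∧ EA.padd d c = some e ∧
    EA.padd a1 c = some a ∧ EA.padd b1 c = some b

def Additive (J : E → E) : Prop :=
  ∀ a b c, EA.padd a b = some c → EA.padd (J a) (J b) = some (J c)

def Retraction (J : E → E) : Prop :=
  EA.Additive J ∧ ∀ a, EA.le a (J EA.one) → J a = a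

def Compression (J : E → E) : Prop :=
  EA.Retraction J ∧ ∀ a, (J a = EA.zero ↔ EA.le a (EA.compl (J EA.one)))

/-- `I` is a supplement of `J`: `Ker J = ran I` and `Ker I = ran J`. -/
def Supplement (I J : E → E) : Prop :=
  (∀ a, J a = EA.zero ↔ ∃ b, I b = a) ∧ (∀ a, I a = EA.zero ↔ ∃ b, J b = a)

/-- the `n`-fold sum `n·a`, when defined. -/
def nsmulE : ℕ → E → Option E
  | 0, _ => some EA.zero
  | n + 1, a => (nsmulE n a).bind fun b => EA.padd a b

def ArchimedeanEA : Prop :=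
  ∀ a : E, (∀ n : ℕ, ∃ b, EA.nsmulE n a = some b) → a = EA.zero

/-- a state on an effect algebra. -/
def IsState (s : E → ℝ) : Prop :=
  s EA.one = 1 ∧ (∀ a, 0 ≤ s a ∧ s a ≤ 1) ∧
    ∀ a b c, EA.padd a b = some c → s c = s a + s b

noncomputable def partialSum (f : ℕ → E) : ℕ → E
  | 0 => EA.zero
  | n + 1 => EA.oplusD (partialSum f n) (f n)

/-- σ-additivity of a state: if all partial sums of an orthogonal sequence are defined
and the orthosum (= supremum of the partial sums) exists, the state is countably additive. -/
def SigmaAdditive (s : E → ℝ) : Prop :=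
  ∀ f : ℕ → E, ∀ b : E,
    (∀ n, ∃ c, EA.padd (EA.partialSum f n) (f n) = some c) →
    (∀ n, EA.le (EA.partialSum f n) b) →
    (∀ c, (∀ n, EA.le (EA.partialSum f n) c) → EA.le b c) →
    Filter.Tendsto (fun n => ∑ i ∈ Finset.range n, s (f i)) Filter.atTop (nhds (s b))

/-- A compression base: a family of compressions indexed by a sub-effect algebra `P`
such that each `p ∈ P` is the focus of `J p`, and Mackey compatible projections
compose to a projection. -/
structure CompressionBase {E : Type u} (EA : EffectAlgebra E) where
  P : Set E
  J : E → E → E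
  sub : EA.SubEA P
  compr : ∀ p ∈ P, EA.Compression (J p)
  focus : ∀ p ∈ P, J p EA.one = p
  mackey : ∀ p ∈ P, ∀ q ∈ P, EA.Mackey p q → ∃ r ∈ P, J p ∘ J q = J r

variable (CB : CompressionBase EA)

/-- `a ∈ C(p)`:  `a = J_p(a) ⊕ J_{p'}(a)`. -/
def inC (a p : E) : Prop :=
  EA.padd (CB.J p a) (CB.J (EA.compl p) a) = some a

/-- `PC(a) = {p ∈ P : a ∈ C(p)}`. -/
def PC (a : E) : Set E := {p | p ∈ CB.P ∧ inC EA CB a p}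

/-- the bicommutant `P(a)`. -/
def bicomm (a : E) : Set E :=
  {p | p ∈ PC EA CB a ∧ ∀ q ∈ PC EA CB a, inC EA CB p q}

/-- `PC(A)` for a set `A ⊆ E`. -/
def PCset (A : Set E) : Set E := {p | p ∈ CB.P ∧ ∀ a ∈ A, inC EA CB a p}

/-- `P(Q) = PC(PC(Q) ∪ Q)`. -/
def Pset (Q : Set E) : Set E := PCset EA CB (PCset EA CB Q ∪ Q)

/-- `P_≤(e,f)`. -/
def Ple (e f : E) : Set E :=
  {p | p ∈ Pset EA CB {e, f} ∧ EA.le (CB.J p e) (CB.J p f) ∧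
    EA.le (CB.J (EA.compl p) f) (CB.J (EA.compl p) e)}

/-- a Boolean subalgebra of `P`: a sub-effect algebra of `E` contained in `P`
whose elements are pairwise Mackey compatible, with witnesses inside. -/
def BooleanSub (B : Set E) : Prop :=
  B ⊆ CB.P ∧ EA.SubEA B ∧
    ∀ p ∈ B, ∀ q ∈ B, ∃ p1 ∈ B, ∃ q1 ∈ B, ∃ c ∈ B, ∃ d e,
      EA.padd p1 q1 = some d ∧ EA.padd d c = some e ∧
      EA.padd p1 c = some p ∧ EA.padd q1 c = some q

/-- `a` is a b-element with associated Boolean subalgebra `B`. -/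
def IsBElementWith (a : E) (B : Set E) : Prop :=
  BooleanSub EA CB B ∧ ∀ p ∈ CB.P, (inC EA CB a p ↔ ∀ b ∈ B, inC EA CB b p)

def IsBElement (a : E) : Prop := ∃ B, IsBElementWith EA CB a B

def BProperty : Prop := ∀ a : E, IsBElement EA CB a

/-- commuting of b-elements: `e C f` iff `P(e) ↔ P(f)`. -/
def CommuteEl (e f : E) : Prop :=
  ∀ p ∈ bicomm EA CB e, ∀ q ∈ bicomm EA CB f, EA.Mackey p q

def BComparability : Prop :=
  BProperty EA CB ∧ ∀ e f : E, CommuteEl EA CB e f → (Ple EA CB e f).Nonempty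

def IsProjCover (a p : E) : Prop :=
  p ∈ CB.P ∧ ∀ q ∈ CB.P, (EA.le a q ↔ EA.le p q)

def ProjCoverProp : Prop := ∀ a : E, ∃ p, IsProjCover EA CB a p

def Spectral : Prop := ProjCoverProp EA CB ∧ BComparability EA CB

/-- a block of `P`: a maximal set of pairwise Mackey compatible projections. -/
def IsBlock (B : Set E) : Prop :=
  B ⊆ CB.P ∧ (∀ p ∈ B, ∀ q ∈ B, EA.Mackey p q) ∧
    ∀ B' : Set E, B' ⊆ CB.P → (∀ p ∈ B', ∀ q ∈ B', EA.Mackey p q) → B ⊆ B' → B' = B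

/-- the C-block `C(B)`. -/
def Cblock (B : Set E) : Set E := {a | ∀ p ∈ B, inC EA CB a p}

/-- `(f − e)_+` (the positive part, defined when `P_≤(e,f)` is nonempty). -/
noncomputable def posPart (e f : E) : E :=
  if h : (Ple EA CB e f).Nonempty then
    EA.osub (CB.J h.some f) (CB.J h.some e)
  else EA.zero

noncomputable def projCover (a : E) : E :=
  if h : ∃ p, IsProjCover EA CB a p then h.choose else EA.zero

def IsMeetP (p q m : E) : Prop :=
  m ∈ CB.P ∧ EA.le m p ∧ EA.le m q ∧ ∀ s ∈ CB.P, EA.le s p → EA.le s q → EA.le s m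

/-- `p ∧ q` in `P`. -/
noncomputable def pmeet (p q : E) : E :=
  if h : ∃ m, IsMeetP EA CB p q m then h.choose else EA.zero

/-- infimum of a set of projections in `P`. -/
def IsInfP (S : Set E) (m : E) : Prop :=
  m ∈ CB.P ∧ (∀ s ∈ S, EA.le m s) ∧
    ∀ t ∈ CB.P, (∀ s ∈ S, EA.le t s) → EA.le t m

/-! Relative (to a projection `q`, i.e. computed in the interval `[0,q]`) notions. -/

def Pq (q : E) : Set E := {p | p ∈ CB.P ∧ EA.le p q}

def inCq (q a p : E) : Prop :=
  EA.padd (CB.J p a) (CB.J (EA.osub q p) a) = some a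

def PCq (q a : E) : Set E := {p | p ∈ Pq EA CB q ∧ inCq EA CB q a p}

def bicommq (q a : E) : Set E :=
  {p | p ∈ PCq EA CB q a ∧ ∀ r ∈ PCq EA CB q a, inCq EA CB q p r}

def PCsetq (q : E) (A : Set E) : Set E :=
  {p | p ∈ Pq EA CB q ∧ ∀ a ∈ A, inCq EA CB q a p}

def Psetq (q : E) (Q : Set E) : Set E := PCsetq EA CB q (PCsetq EA CB q Q ∪ Q)

def Pleq (q e f : E) : Set E :=
  {p | p ∈ Psetq EA CB q {e, f} ∧ EA.le (CB.J p e) (CB.J p f) ∧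
    EA.le (CB.J (EA.osub q p) f) (CB.J (EA.osub q p) e)}

noncomputable def posPartq (q e f : E) : E :=
  if h : (Pleq EA CB q e f).Nonempty then
    EA.osub (CB.J h.some f) (CB.J h.some e)
  else EA.zero

def IsProjCoverq (q a p : E) : Prop :=
  p ∈ Pq EA CB q ∧ ∀ s ∈ Pq EA CB q, (EA.le a s ↔ EA.le p s)

noncomputable def projCoverq (q a : E) : E :=
  if h : ∃ p, IsProjCoverq EA CB q a p then h.choose else EA.zero

def Mackeyq (q a b : E) : Prop :=
  ∃ a1 b1 c d e, EA.padd a1 b1 = some d ∧ EA.padd d c = some e ∧ EA.le e q ∧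
    EA.padd a1 c = some a ∧ EA.padd b1 c = some b

def SubEAq (q : E) (F : Set E) : Prop :=
  EA.zero ∈ F ∧ q ∈ F ∧ (∀ x ∈ F, EA.osub q x ∈ F) ∧
    ∀ x ∈ F, ∀ y ∈ F, ∀ z, EA.padd x y = some z → EA.le z q → z ∈ F

def BooleanSubq (q : E) (B : Set E) : Prop :=
  B ⊆ Pq EA CB q ∧ SubEAq EA q B ∧
    ∀ p ∈ B, ∀ r ∈ B, ∃ p1 ∈ B, ∃ r1 ∈ B, ∃ c ∈ B, ∃ d e,
      EA.padd p1 r1 = some d ∧ EA.padd d c = some e ∧ EA.le e q ∧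
      EA.padd p1 c = some p ∧ EA.padd r1 c = some r

def IsBElementq (q a : E) : Prop :=
  ∃ B, BooleanSubq EA CB q B ∧
    ∀ p ∈ Pq EA CB q, (inCq EA CB q a p ↔ ∀ b ∈ B, inCq EA CB q b p)

def BPropertyq (q : E) : Prop := ∀ a : E, EA.le a q → IsBElementq EA CB q a

def CommuteElq (q e f : E) : Prop :=
  ∀ p ∈ bicommq EA CB q e, ∀ r ∈ bicommq EA CB q f, Mackeyq EA q p r

def BComparabilityq (q : E) : Prop :=
  BPropertyq EA CB q ∧ ∀ e f : E, EA.le e q → EA.le f q →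
    CommuteElq EA CB q e f → (Pleq EA CB q e f).Nonempty

/-! The binary spectral resolution. -/

/-- `λ(w) = Σ_j w_j 2^{-j}` (head of the list is the first digit). -/
def lamOf : List Bool → ℚ
  | [] => 0
  | b :: t => ((if b then 1 else 0) + lamOf t) / 2

/-- all binary strings of length `n`, in lexicographic order. -/
def allStrings : ℕ → List (List Bool)
  | 0 => [[]]
  | n + 1 => (allStrings n).flatMap fun w => [w ++ [false], w ++ [true]]

noncomputable def listSum (l : List E) : E :=
  l.foldl (fun acc x => EA.oplusD acc x) EA.zero

/-- the families `(u_w, c_w)`; the binary string is given in reversed order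
(head of the list is the last digit). -/
noncomputable def ucAux (a : E) : List Bool → E × E
  | [] => (projCover EA CB a, a)
  | bit :: t =>
      let p := ucAux a t
      let q := p.1
      let cw := p.2
      let cw' := EA.osub q cw
      let d := posPartq EA CB q cw' cw
      let u0 := pmeet EA CB (EA.osub q (projCoverq EA CB q d)) q
      if bit then (pmeet EA CB q (EA.compl u0), d)
      else (u0, EA.oplusD (CB.J u0 cw) (CB.J u0 cw))

noncomputable def uw (a : E) (w : List Bool) : E := (ucAux EA CB a w.reverse).1

noncomputable def cw (a : E) (w : List Bool) : E := (ucAux EA CB a w.reverse).2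

/-- the binary spectral projection `p_{a,λ(w1)}`. -/
noncomputable def pbin (a : E) (w : List Bool) : E :=
  listSum EA (EA.compl (projCover EA CB a) ::
    (((allStrings (w.length + 1)).filter
        fun v => lamOf v ≤ lamOf (w ++ [false])).map (uw EA CB a)))

def Dyadic01 (x : ℚ) : Prop := ∃ n k : ℕ, (k : ℚ) ≤ 2 ^ n ∧ x = (k : ℚ) / 2 ^ n

/-- the binary spectral resolution `p_{a,λ}`, for dyadic rationals `λ ∈ [0,1]`. -/
noncomputable def pdyad (a : E) (x : ℚ) : E :=
  if x ≤ 0 then EA.compl (projCover EA CB a)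
  else if 1 ≤ x then EA.one
  else if h : ∃ w : List Bool, lamOf (w ++ [true]) = x then pbin EA CB a h.choose
  else EA.zero

/-- the rational spectral resolution `p_{a,λ} = ⋀_{μ > λ, μ dyadic} p_{a,μ}`. -/
noncomputable def ratRes (a : E) (x : ℚ) : E :=
  if h : ∃ m, IsInfP EA CB {y | ∃ μ, Dyadic01 μ ∧ x < μ ∧ y = pdyad EA CB a μ} m
  then h.choose else EA.zero

/-- the partial maps `f_0(b) = 2b`, `f_1(b) = (2b')'` computed in `[0,uu]`. -/
noncomputable def fstep (uu b : E) (bit : Bool) : Option E :=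
  if bit then
    (if EA.le (EA.osub uu b) b
      then some (EA.osub uu (EA.oplusD (EA.osub uu b) (EA.osub uu b))) else none)
  else
    (if EA.le b (EA.osub uu b) then some (EA.oplusD b b) else none)

/-- `f_w = f_{w_n} ∘ ⋯ ∘ f_{w_1}`, computed in `[0,uu]`, as a partial map. -/
noncomputable def fword (uu : E) (w : List Bool) (b : E) : Option E :=
  w.foldl (fun ob bit => ob.bind fun x => fstep EA uu x bit) (some b)

end EffectAlgebra

open EffectAlgebra in
/-- if `P ⊆ E` is a sub-effect algebra and `(J_p)_{p∈P}` is a family of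
compressions with `J_p(1) = p`, then `P` is an orthomodular poset (every element of `P`
is principal in `P` and `p ⊕ q` is the supremum `p ∨ q` in `P` whenever it is defined),
and `J_{p'}` is a supplement of `J_p` for every `p ∈ P`. -/
theorem statement0 {E : Type u} (EA : EffectAlgebra E) (P : Set E) (hP : EA.SubEA P)
    (J : E → E → E) (hJ : ∀ p ∈ P, EA.Compression (J p) ∧ J p EA.one = p) :
    (∀ p ∈ P, ∀ x ∈ P, ∀ y ∈ P, EA.le x p → EA.le y p →
      ∀ z, EA.padd x y = some z → EA.le z p) ∧
    (∀ p ∈ P, ∀ q ∈ P, ∀ r, EA.padd p q = some r →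
      r ∈ P ∧ EA.le p r ∧ EA.le q r ∧ ∀ s ∈ P, EA.le p s → EA.le q s → EA.le r s) ∧
    (∀ p ∈ P, EA.Supplement (J (EA.compl p)) (J p)) := by
  have hcompl : ∀ a, EA.padd a (EA.compl a) = some EA.one :=
    fun a => (EA.orth_exists a).choose_spec
  have hle_one : ∀ a, EA.le a EA.one := fun a => ⟨EA.compl a, hcompl a⟩
  have hmono : ∀ K, EA.Additive K → ∀ a b, EA.le a b → EA.le (K a) (K b) := by
    rintro K hK a b ⟨c, hc⟩; exact ⟨K c, hK a c b hc⟩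
  have hcc : ∀ a, EA.compl (EA.compl a) = a := fun a =>
    EA.orth_unique (EA.compl a) _ a (hcompl _) ((EA.comm _ a).trans (hcompl a))
  -- principal elements (without needing x,y ∈ P)
  have hprin : ∀ p ∈ P, ∀ x y, EA.le x p → EA.le y p →
      ∀ z, EA.padd x y = some z → EA.le z p := by
    intro p hp x y hx hy z hz
    obtain ⟨⟨⟨hadd, hretr⟩, _⟩, hfoc⟩ := hJ p hp
    have hx' : J p x = x := hretr x (by rwa [hfoc])
    have hy' : J p y = y := hretr y (by rwa [hfoc])
    have h1 := hadd x y z hz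
    rw [hx', hy'] at h1
    have hJz : J p z = z := Option.some.inj (h1.symm.trans hz)
    have := hmono (J p) hadd z EA.one (hle_one z)
    rwa [hJz, hfoc] at this
  refine ⟨fun p hp x _ y _ => hprin p hp x y, ?_, ?_⟩
  · intro p hp q hq r hr
    refine ⟨hP.2.2.2 p hp q hq r hr, ⟨q, hr⟩, ⟨p, (EA.comm q p).trans hr⟩,
      fun s hs hps hqs => hprin s hs p q hps hqs r hr⟩
  · intro p hp
    have hp' : EA.compl p ∈ P := hP.2.2.1 p hp
    obtain ⟨⟨⟨hadd, hretr⟩, hker⟩, hfoc⟩ := hJ p hp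
    obtain ⟨⟨⟨hadd', hretr'⟩, hker'⟩, hfoc'⟩ := hJ (EA.compl p) hp'
    rw [hfoc] at hker
    rw [hfoc', hcc] at hker'
    constructor
    · intro a
      constructor
      · intro ha
        refine ⟨a, hretr' a ?_⟩
        rw [hfoc']
        exact (hker a).mp ha
      · rintro ⟨b, hb⟩
        apply (hker a).mpr
        have := hmono (J (EA.compl p)) hadd' b EA.one (hle_one b)
        rwa [hb, hfoc'] at this
    · intro a
      constructor
      · intro ha
        refine ⟨a, hretr a ?_⟩
        rw [hfoc]
        exact (hker' a).mp ha
      · rintro ⟨b, hb⟩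
        apply (hker' a).mpr
        have := hmono (J p) hadd b EA.one (hle_one b)
        rwa [hb, hfoc] at this
end

section
/- Let (J_p)_{p∈P} be a compression base on an effect algebra E and let p, q ∈ P. Then p and q are Mackey compatible if and only if J_p ∘ J_q = J_q ∘ J_p and the infimum p∧q exists in P with J_p ∘ J_q = J_{p∧q}. -/
/- Common definitions: effect algebras, compression bases, spectrality -/

attribute [local instance 0] Classical.propDecidable

universe u

namespace EffectAlgebra

variable {E : Type u} (EA : EffectAlgebra E)

lemma compl_spec (a : E) : EA.padd a (EA.compl a) = some EA.one :=
  (EA.orth_exists a).choose_spec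

lemma padd_one_zero : EA.padd EA.one EA.zero = some EA.one := by
  obtain ⟨x, hx⟩ := EA.orth_exists EA.one
  have hx' : EA.padd x EA.one = some EA.one := by rw [EA.comm]; exact hx
  have h0 := EA.add_one x EA.one hx'
  rw [h0] at hx; exact hx

lemma padd_zero (a : E) : EA.padd a EA.zero = some a := by
  have key : ∀ b : E, EA.padd (EA.compl b) EA.zero = some (EA.compl b) := by
    intro b
    obtain ⟨bc, h1, h2⟩ := EA.assoc b (EA.compl b) EA.zero EA.one EA.one
      (EA.compl_spec b) EA.padd_one_zero
    have hbc : bc = EA.compl b := EA.orth_unique b bc (EA.compl b) h2 (EA.compl_spec b)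
    rw [hbc] at h1; exact h1
  have hc : a = EA.compl (EA.compl a) := by
    apply EA.orth_unique (EA.compl a)
    · rw [EA.comm]; exact EA.compl_spec a
    · exact EA.compl_spec (EA.compl a)
  conv_lhs => rw [hc]
  rw [key (EA.compl a), ← hc]

lemma compl_compl (a : E) : EA.compl (EA.compl a) = a :=
  (EA.orth_unique (EA.compl a) a (EA.compl (EA.compl a))
    (by rw [EA.comm]; exact EA.compl_spec a) (EA.compl_spec (EA.compl a))).symm

lemma cancel {a b c d : E} (h1 : EA.padd a c = some b) (h2 : EA.padd a d = some b) :
    c = d := by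
  obtain ⟨b', hb'⟩ := EA.orth_exists b
  obtain ⟨t, ht1, ht2⟩ := EA.assoc a c b' b EA.one h1 hb'
  obtain ⟨t', ht1', ht2'⟩ := EA.assoc a d b' b EA.one h2 hb'
  have htt : t = t' := EA.orth_unique a t t' ht2 ht2'
  rw [← htt] at ht1'
  have hta : EA.padd t a = some EA.one := by rw [EA.comm]; exact ht2
  obtain ⟨u, hu1, hu2⟩ := EA.assoc c b' a t EA.one ht1 hta
  obtain ⟨u', hu1', hu2'⟩ := EA.assoc d b' a t EA.one ht1' hta
  rw [hu1] at hu1'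
  have huu : u = u' := Option.some.inj hu1'
  rw [← huu] at hu2'
  have hcu : c = EA.compl u := EA.orth_unique u c (EA.compl u)
    (by rw [EA.comm]; exact hu2) (EA.compl_spec u)
  have hdu : d = EA.compl u := EA.orth_unique u d (EA.compl u)
    (by rw [EA.comm]; exact hu2') (EA.compl_spec u)
  rw [hcu, hdu]

lemma le_refl' (a : E) : EA.le a a := ⟨EA.zero, EA.padd_zero a⟩

lemma le_one' (a : E) : EA.le a EA.one := ⟨EA.compl a, EA.compl_spec a⟩

lemma zero_le' (a : E) : EA.le EA.zero a := ⟨a, by rw [EA.comm]; exact EA.padd_zero a⟩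

lemma eq_zero_left {x y : E} (h : EA.padd x y = some EA.zero) : x = EA.zero := by
  have h01 : EA.padd EA.zero EA.one = some EA.one := by
    rw [EA.comm]; exact EA.padd_one_zero
  obtain ⟨t, ht1, ht2⟩ := EA.assoc x y EA.one EA.zero EA.one h h01
  have hy : y = EA.zero := EA.add_one y t ht1
  rw [hy] at h
  exact (Option.some.inj ((EA.padd_zero x).symm.trans h))

lemma le_antisymm' {a b : E} (h1 : EA.le a b) (h2 : EA.le b a) : a = b := by
  obtain ⟨c, hc⟩ := h1; obtain ⟨d, hd⟩ := h2
  obtain ⟨t, ht1, ht2⟩ := EA.assoc a c d b a hc hd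
  have ht0 : t = EA.zero := EA.cancel ht2 (EA.padd_zero a)
  rw [ht0] at ht1
  have hc0 : c = EA.zero := EA.eq_zero_left ht1
  rw [hc0] at hc
  exact Option.some.inj ((EA.padd_zero a).symm.trans hc)

lemma compl_le_compl {a b : E} (h : EA.le a b) :
    EA.le (EA.compl b) (EA.compl a) := by
  obtain ⟨c, hc⟩ := h
  obtain ⟨t, ht1, ht2⟩ := EA.assoc a c (EA.compl b) b EA.one hc (EA.compl_spec b)
  have hta : t = EA.compl a := EA.orth_unique a t _ ht2 (EA.compl_spec a)
  refine ⟨c, ?_⟩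
  rw [EA.comm, ← hta]; exact ht1

lemma le_of_compl_le {a b : E} (h : EA.le (EA.compl b) (EA.compl a)) :
    EA.le a b := by
  have := EA.compl_le_compl h
  rwa [EA.compl_compl, EA.compl_compl] at this

lemma perp_of_le_compl {a b : E} (h : EA.le a (EA.compl b)) :
    ∃ e, EA.padd a b = some e := by
  obtain ⟨x, hx⟩ := h
  have hx' : EA.padd x a = some (EA.compl b) := by rw [EA.comm]; exact hx
  have h2 : EA.padd (EA.compl b) b = some EA.one := by
    rw [EA.comm]; exact EA.compl_spec b
  obtain ⟨t, ht1, ht2⟩ := EA.assoc x a b (EA.compl b) EA.one hx' h2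
  exact ⟨t, ht1⟩

variable (CB : CompressionBase EA)

lemma J_mono {p : E} (hp : p ∈ CB.P) {a b : E} (h : EA.le a b) :
    EA.le (CB.J p a) (CB.J p b) := by
  obtain ⟨c, hc⟩ := h
  exact ⟨CB.J p c, (CB.compr p hp).1.1 a c b hc⟩

lemma J_le {p : E} (hp : p ∈ CB.P) (a : E) : EA.le (CB.J p a) p := by
  have := J_mono EA CB hp (EA.le_one' a)
  rwa [CB.focus p hp] at this

lemma J_fix {p : E} (hp : p ∈ CB.P) {a : E} (h : EA.le a p) : CB.J p a = a := by
  apply (CB.compr p hp).1.2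
  rwa [CB.focus p hp]

lemma J_zero_iff {p : E} (hp : p ∈ CB.P) (a : E) :
    CB.J p a = EA.zero ↔ EA.le a (EA.compl p) := by
  have := (CB.compr p hp).2 a
  rwa [CB.focus p hp] at this

lemma J_zero {p : E} (hp : p ∈ CB.P) : CB.J p EA.zero = EA.zero :=
  J_fix EA CB hp (EA.zero_le' p)

lemma mackey_symm {a b : E} (h : EA.Mackey a b) : EA.Mackey b a := by
  obtain ⟨a1, b1, c, d, e, h1, h2, h3, h4⟩ := h
  exact ⟨b1, a1, c, d, e, by rw [EA.comm]; exact h1, h2, h4, h3⟩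

lemma meet_of_comp {p q r : E} (hp : p ∈ CB.P) (hq : q ∈ CB.P) (hr : r ∈ CB.P)
    (h : CB.J p ∘ CB.J q = CB.J r) : IsMeetP EA CB p q r := by
  have happ : ∀ a, CB.J p (CB.J q a) = CB.J r a := fun a => congrFun h a
  have hrp : EA.le r p := by
    have h1 : CB.J p (CB.J q EA.one) = r := by rw [happ, CB.focus r hr]
    rw [CB.focus q hq] at h1
    rw [← h1]; exact J_le EA CB hp q
  have hrq : EA.le r q := by
    have h1 : CB.J r (EA.compl q) = EA.zero := by
      rw [← happ, (J_zero_iff EA CB hq _).2 (EA.le_refl' _), J_zero EA CB hp]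
    exact EA.le_of_compl_le ((J_zero_iff EA CB hr _).1 h1)
  refine ⟨hr, hrp, hrq, ?_⟩
  intro s hs hsp hsq
  have hfix : CB.J r s = s := by
    rw [← happ, J_fix EA CB hq hsq, J_fix EA CB hp hsp]
  rw [← hfix]; exact J_le EA CB hr s

end EffectAlgebra

open EffectAlgebra in
/-- for projections `p, q` in a compression base, `p` and `q` are
Mackey compatible iff `J_p ∘ J_q = J_q ∘ J_p` and the infimum `p ∧ q` exists in `P`
with `J_p ∘ J_q = J_{p∧q}`. -/
theorem statement2 {E : Type u} (EA : EffectAlgebra E) (CB : CompressionBase EA)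
    (p q : E) (hp : p ∈ CB.P) (hq : q ∈ CB.P) :
    EA.Mackey p q ↔
      (CB.J p ∘ CB.J q = CB.J q ∘ CB.J p ∧
        ∃ m, IsMeetP EA CB p q m ∧ CB.J p ∘ CB.J q = CB.J m) := by
  constructor
  · intro hm
    obtain ⟨r, hr, hJr⟩ := CB.mackey p hp q hq hm
    obtain ⟨s, hs, hJs⟩ := CB.mackey q hq p hp (mackey_symm EA hm)
    have hmr := meet_of_comp EA CB hp hq hr hJr
    have hms := meet_of_comp EA CB hq hp hs hJs
    have hrs : r = s := EA.le_antisymm'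
      (hms.2.2.2 r hr hmr.2.2.1 hmr.2.1)
      (hmr.2.2.2 s hs hms.2.2.1 hms.2.1)
    refine ⟨?_, r, hmr, hJr⟩
    rw [hJr, hJs, hrs]
  · rintro ⟨hcomm, -⟩
    have hc : CB.J p q = CB.J q p := by
      have h1 := congrFun hcomm EA.one
      simpa only [Function.comp_apply, CB.focus p hp, CB.focus q hq] using h1
    have hcp : EA.le (CB.J p q) p := J_le EA CB hp q
    have hcq : EA.le (CB.J p q) q := by rw [hc]; exact J_le EA CB hq p
    obtain ⟨p1, hp1⟩ := hcp
    obtain ⟨q1, hq1⟩ := hcq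
    have hJq1 : CB.J p q1 = EA.zero := by
      have hadd := (CB.compr p hp).1.1 (CB.J p q) q1 q hq1
      rw [J_fix EA CB hp (J_le EA CB hp q)] at hadd
      exact EA.cancel hadd (EA.padd_zero (CB.J p q))
    have hq1p : EA.le q1 (EA.compl p) := (J_zero_iff EA CB hp q1).1 hJq1
    obtain ⟨e, he⟩ := EA.perp_of_le_compl hq1p
    have hpe : EA.padd p q1 = some e := by rw [EA.comm]; exact he
    obtain ⟨d, hd1, hd2⟩ := EA.assoc (CB.J p q) p1 q1 p e hp1 hpe
    exact ⟨p1, q1, CB.J p q, d, e, hd1, by rw [EA.comm]; exact hd2,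
      by rw [EA.comm]; exact hp1, by rw [EA.comm]; exact hq1⟩
end

section
/- Let E be an effect algebra with compression base (J_p)_{p∈P} and let a ∈ E be a b-element with associated Boolean subalgebra B(a) ⊆ P. Then: (i) B(a) ⊆ P(a); (ii) for every p ∈ P, a ∈ C(p) if and only if P(a) ⊆ C(p). -/
/- Common definitions: effect algebras, compression bases, spectrality -/

attribute [local instance 0] Classical.propDecidable

universe u

namespace EffectAlgebra

variable {E : Type u} (EA : EffectAlgebra E)

lemma compl_unique {a x : E} (h : EA.padd a x = some EA.one) : x = EA.compl a :=
  EA.orth_unique a x (EA.compl a) h (EA.compl_spec a)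

lemma zero_padd (a : E) : EA.padd EA.zero a = some a := by
  rw [EA.comm]; exact EA.padd_zero a

/-- Mackey compatible projections commute. -/
lemma mackey_inC (CB : CompressionBase EA) {p q : E} (hp : p ∈ CB.P)
    (hm : EA.Mackey p q) : inC EA CB q p := by
  obtain ⟨a1, b1, c, d, e, hd, he, hpp, hqq⟩ := hm
  have hpP := CB.compr p hp
  have hp'P : EA.compl p ∈ CB.P := CB.sub.2.2.1 p hp
  have hp'C := CB.compr (EA.compl p) hp'P
  -- c ≤ p and c ≤ compl (compl p)
  have hcp : EA.le c p := ⟨a1, by rw [EA.comm]; exact hpp⟩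
  -- b1 ⊕ p = e
  have hb1p : EA.padd b1 p = some e := by
    obtain ⟨bc, hbc, hbc2⟩ := EA.assoc b1 a1 c d e (by rw [EA.comm]; exact hd) he
    rw [hpp] at hbc
    rw [← Option.some_inj.mp hbc] at hbc2
    exact hbc2
  -- b1 ≤ compl p
  have hb1p' : EA.le b1 (EA.compl p) := by
    obtain ⟨bc, hbc, hbc2⟩ := EA.assoc p b1 (EA.compl e) e EA.one
      (by rw [EA.comm]; exact hb1p) (EA.compl_spec e)
    have : bc = EA.compl p := EA.compl_unique hbc2
    exact ⟨EA.compl e, by rw [hbc, this]⟩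
  -- J p b1 = 0
  have hJpb1 : CB.J p b1 = EA.zero := by
    apply ((hpP.2 b1).mpr)
    rw [CB.focus p hp]; exact hb1p'
  -- J p c = c
  have hJpc : CB.J p c = c := hpP.1.2 c (by rw [CB.focus p hp]; exact hcp)
  -- J p q = c
  have hJpq : CB.J p q = c := by
    have := hpP.1.1 b1 c q hqq
    rw [hJpb1, hJpc, EA.zero_padd] at this
    exact Option.some_inj.mp this.symm
  -- J p' b1 = b1
  have hJp'b1 : CB.J (EA.compl p) b1 = b1 :=
    hp'C.1.2 b1 (by rw [CB.focus _ hp'P]; exact hb1p')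
  -- J p' c = 0
  have hJp'c : CB.J (EA.compl p) c = EA.zero := by
    apply ((hp'C.2 c).mpr)
    rw [CB.focus _ hp'P, EA.compl_compl]; exact hcp
  -- J p' q = b1
  have hJp'q : CB.J (EA.compl p) q = b1 := by
    have := hp'C.1.1 c b1 q (by rw [EA.comm]; exact hqq)
    rw [hJp'c, hJp'b1, EA.zero_padd] at this
    exact Option.some_inj.mp this.symm
  unfold inC
  rw [hJpq, hJp'q, EA.comm]
  exact hqq

end EffectAlgebra

open EffectAlgebra in
/-- if `a` is a b-element with associated Boolean subalgebra `B`, then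
(i) `B ⊆ P(a)`, and (ii) for `p ∈ P`: `a ∈ C(p)` iff `P(a) ⊆ C(p)`. -/
theorem statement3 {E : Type u} (EA : EffectAlgebra E) (CB : CompressionBase EA)
    (a : E) (B : Set E) (h : IsBElementWith EA CB a B) :
    B ⊆ bicomm EA CB a ∧
      ∀ p ∈ CB.P, (inC EA CB a p ↔ ∀ r ∈ bicomm EA CB a, inC EA CB r p) := by
  obtain ⟨hBool, hbel⟩ := h
  obtain ⟨hBP, hBsub, hBmack⟩ := hBool
  -- every element of B is in PC(a)
  have hPC : ∀ b ∈ B, b ∈ PC EA CB a := by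
    intro b hb
    refine ⟨hBP hb, ?_⟩
    apply (hbel b (hBP hb)).mpr
    intro c hc
    obtain ⟨p1, hp1, q1, hq1, cc, hcc, d, e, hd, he, hpc, hqc⟩ := hBmack b hb c hc
    exact mackey_inC EA CB (hBP hb) ⟨p1, q1, cc, d, e, hd, he, hpc, hqc⟩
  have hi : B ⊆ bicomm EA CB a := by
    intro b hb
    refine ⟨hPC b hb, ?_⟩
    intro q hq
    exact (hbel q hq.1).mp hq.2 b hb
  refine ⟨hi, ?_⟩
  intro p hp
  constructor
  · intro hap r hr
    exact hr.2 p ⟨hp, hap⟩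
  · intro hr
    apply (hbel p hp).mpr
    intro b hb
    exact hr b (hi hb)
end

section
/- Let (G, u) be a lattice-ordered abelian group with order unit u and let n ∈ ℕ. The following are equivalent: (i) for any a, b ∈ [0, nu] there is a sharp element p ∈ [0, u] such that Ũ_p(a) ≤ Ũ_p(b) and Ũ_{p'}(a) ≥ Ũ_{p'}(b); (ii) for any a ∈ [−nu, nu] there is a sharp element p ∈ [0, u] such that Ũ_p(a) ≤ 0 and Ũ_{p'}(a) ≥ 0. -/
/-!
For sharp `p`, the elements `c = n • p` and `d = n • (u - p)` are disjoint, positive, and sum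
to `n • u`. Splitting `0 ≤ x, y ≤ n • u` as `x = x ⊓ c + x ⊓ d` (and likewise `y`) shows
`Ũ_p(x - y) = Ũ_p(x) - Ũ_p(y)`, and the same for `p' = u - p`. Hence condition (ii) for `x - y`
is condition (i) for the pair `(x, y)`: apply (ii) to `a - b`, and (i) to `(a⁺, a⁻)`.
-/

section DisjointPositiveElements

variable {G : Type*} [AddCommGroup G] [Lattice G] [CovariantClass G G (· + ·) (· ≤ ·)]
  {a b c d s t x y : G}

lemma inf_add_le_inf_add_inf (ha : 0 ≤ a) (hb : 0 ≤ b) (hc : 0 ≤ c) :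
    a ⊓ (b + c) ≤ a ⊓ b + a ⊓ c := by
  have h₁ : a ⊓ (b + c) ≤ a ⊓ b + c := by
    rw [← sub_le_iff_le_add]
    exact le_inf ((sub_le_sub_right inf_le_left c).trans (sub_le_self a hc))
      (sub_le_iff_le_add.2 inf_le_right)
  have h₂ : a ⊓ (b + c) ≤ a ⊓ b + a :=
    inf_le_left.trans (le_add_of_nonneg_left (le_inf ha hb))
  calc a ⊓ (b + c) ≤ (a ⊓ b + c) ⊓ (a ⊓ b + a) := le_inf h₁ h₂
    _ = a ⊓ b + a ⊓ c := by rw [← add_inf, inf_comm c a]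

lemma inf_add_eq_zero (ha : 0 ≤ a) (hb : 0 ≤ b) (hc : 0 ≤ c) (hab : a ⊓ b = 0)
    (hac : a ⊓ c = 0) : a ⊓ (b + c) = 0 :=
  le_antisymm (by simpa [hab, hac] using inf_add_le_inf_add_inf ha hb hc)
    (le_inf ha (add_nonneg hb hc))

lemma inf_nsmul_eq_zero (ha : 0 ≤ a) (hb : 0 ≤ b) (hab : a ⊓ b = 0) (k : ℕ) :
    a ⊓ k • b = 0 := by
  induction k with
  | zero => simpa using ha
  | succ k ih => rw [succ_nsmul]; exact inf_add_eq_zero ha (nsmul_nonneg hb k) hb ih hab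

lemma nsmul_inf_nsmul_eq_zero (ha : 0 ≤ a) (hb : 0 ≤ b) (hab : a ⊓ b = 0) (m k : ℕ) :
    m • a ⊓ k • b = 0 := by
  rw [inf_comm]
  exact inf_nsmul_eq_zero (nsmul_nonneg hb k) ha (by rw [inf_comm, inf_nsmul_eq_zero ha hb hab])
    m

lemma inf_add_inf_eq_self (hc : 0 ≤ c) (hd : 0 ≤ d) (hcd : c ⊓ d = 0) (hx₀ : 0 ≤ x)
    (hx : x ≤ c + d) : x ⊓ c + x ⊓ d = x := by
  have hdisj : (x ⊓ c) ⊓ (x ⊓ d) = 0 := by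
    rw [inf_inf_inf_comm, inf_idem, hcd, inf_eq_right.mpr hx₀]
  refine le_antisymm ?_ ?_
  · rw [← inf_add_sup (x ⊓ c) (x ⊓ d), hdisj, zero_add]
    exact sup_le inf_le_left inf_le_left
  · simpa [inf_eq_left.mpr hx] using inf_add_le_inf_add_inf hx₀ hc hd

lemma add_inf_eq_left_of_inf_eq_zero (hcd : c ⊓ d = 0) (hs₀ : 0 ≤ s) (hs : s ≤ c)
    (ht₀ : 0 ≤ t) (ht : t ≤ d) : (s + t) ⊓ c = s := by
  refine le_antisymm ?_ (le_inf (le_add_of_nonneg_right ht₀) hs)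
  calc (s + t) ⊓ c = c ⊓ (s + t) := inf_comm _ _
    _ ≤ c ⊓ s + c ⊓ t := inf_add_le_inf_add_inf (hs₀.trans hs) hs₀ ht₀
    _ ≤ s + 0 := add_le_add inf_le_right (hcd ▸ inf_le_inf_left c ht)
    _ = s := add_zero s

/-- Splitting `x` and `y` along `c` and `d` puts the `c`-part of `x - y + (c + d)` in `[0, 2c]`
and its `d`-part in `[0, 2d]`. -/
lemma sub_add_inf_two_nsmul_sub (hc : 0 ≤ c) (hd : 0 ≤ d) (hcd : c ⊓ d = 0) (hx₀ : 0 ≤ x)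
    (hx : x ≤ c + d) (hy₀ : 0 ≤ y) (hy : y ≤ c + d) :
    (x - y + (c + d)) ⊓ (2 • c) - c = x ⊓ c - y ⊓ c := by
  have hsplit : x - y + (c + d) = (c + (x ⊓ c - y ⊓ c)) + (d + (x ⊓ d - y ⊓ d)) := by
    conv_lhs => rw [← inf_add_inf_eq_self hc hd hcd hx₀ hx, ← inf_add_inf_eq_self hc hd hcd hy₀ hy]
    abel
  have hpart : ∀ {e : G}, 0 ≤ e → 0 ≤ e + (x ⊓ e - y ⊓ e) ∧ e + (x ⊓ e - y ⊓ e) ≤ 2 • e := by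
    intro e he
    constructor
    · rw [add_sub_left_comm]
      exact add_nonneg (le_inf hx₀ he) (sub_nonneg.2 inf_le_right)
    · rw [two_nsmul]
      exact add_le_add_right ((sub_le_self _ (le_inf hy₀ he)).trans inf_le_right) e
  rw [hsplit, add_inf_eq_left_of_inf_eq_zero (nsmul_inf_nsmul_eq_zero hc hd hcd 2 2)
    (hpart hc).1 (hpart hc).2 (hpart hd).1 (hpart hd).2]
  abel

end DisjointPositiveElements

section Sharp

variable {G : Type*} [AddCommGroup G] [Lattice G] [CovariantClass G G (· + ·) (· ≤ ·)]
  {u p x y : G}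

def IsSharp (u p : G) : Prop := 0 ≤ p ∧ p ≤ u ∧ p ⊓ (u - p) = 0

lemma IsSharp.compl (hp : IsSharp u p) : IsSharp u (u - p) :=
  ⟨sub_nonneg.2 hp.2.1, sub_le_self u hp.1, by rw [sub_sub_cancel, inf_comm, hp.2.2]⟩

/-- For `-(n • u) ≤ z ≤ n • u` the left-hand side is `Ũ_p(z)`; on `z = x - y` it splits as
`Ũ_p(x) - Ũ_p(y)`. -/
lemma IsSharp.sub_add_inf_nsmul_sub (hp : IsSharp u p) (n : ℕ) (hx₀ : 0 ≤ x) (hx : x ≤ n • u)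
    (hy₀ : 0 ≤ y) (hy : y ≤ n • u) :
    (x - y + n • u) ⊓ ((2 * n) • p) - n • p = x ⊓ n • p - y ⊓ n • p := by
  have hsum : n • p + n • (u - p) = n • u := by rw [← nsmul_add, add_sub_cancel]
  rw [mul_nsmul', ← hsum]
  exact sub_add_inf_two_nsmul_sub (nsmul_nonneg hp.1 n) (nsmul_nonneg hp.compl.1 n)
    (nsmul_inf_nsmul_eq_zero hp.1 hp.compl.1 hp.2.2 n n) hx₀ (hsum ▸ hx) hy₀ (hsum ▸ hy)

end Sharp

theorem statement6_general {G : Type*} [AddCommGroup G] [Lattice G]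
    [CovariantClass G G (· + ·) (· ≤ ·)]
    (u : G) (n : ℕ) :
    (∀ a b : G, 0 ≤ a → a ≤ n • u → 0 ≤ b → b ≤ n • u →
      ∃ p : G, (0 ≤ p ∧ p ≤ u ∧ p ⊓ (u - p) = 0) ∧
        a ⊓ n • p ≤ b ⊓ n • p ∧ b ⊓ n • (u - p) ≤ a ⊓ n • (u - p)) ↔
    (∀ a : G, -(n • u) ≤ a → a ≤ n • u →
      ∃ p : G, (0 ≤ p ∧ p ≤ u ∧ p ⊓ (u - p) = 0) ∧
        (a + n • u) ⊓ ((2 * n) • p) - n • p ≤ 0 ∧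
        0 ≤ (a + n • u) ⊓ ((2 * n) • (u - p)) - n • (u - p)) := by
  constructor
  · intro H a ha₁ ha₂
    have hnu : 0 ≤ n • u := (abs_nonneg a).trans (abs_le'.2 ⟨ha₂, neg_le.1 ha₁⟩)
    have hpos : a⁺ ≤ n • u := sup_le ha₂ hnu
    have hneg : a⁻ ≤ n • u := sup_le (neg_le.1 ha₁) hnu
    obtain ⟨p, hp, h₁, h₂⟩ := H a⁺ a⁻ (posPart_nonneg a) hpos (negPart_nonneg a) hneg
    have hp : IsSharp u p := hp
    have hU := hp.sub_add_inf_nsmul_sub n (posPart_nonneg a) hpos (negPart_nonneg a) hneg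
    have hU' := hp.compl.sub_add_inf_nsmul_sub n (posPart_nonneg a) hpos (negPart_nonneg a) hneg
    rw [posPart_sub_negPart] at hU hU'
    exact ⟨p, hp, hU.trans_le (sub_nonpos.2 h₁), (sub_nonneg.2 h₂).trans_eq hU'.symm⟩
  · intro H a b ha₀ ha hb₀ hb
    obtain ⟨p, hp, h₁, h₂⟩ := H (a - b)
      (neg_le_sub_iff_le_add.2 (hb.trans (le_add_of_nonneg_left ha₀)))
      ((sub_le_self a hb₀).trans ha)
    have hp : IsSharp u p := hp
    rw [hp.sub_add_inf_nsmul_sub n ha₀ ha hb₀ hb] at h₁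
    rw [hp.compl.sub_add_inf_nsmul_sub n ha₀ ha hb₀ hb] at h₂
    exact ⟨p, hp, sub_nonpos.1 h₁, sub_nonneg.1 h₂⟩

/-- in a lattice-ordered abelian group `(G,u)` with order unit `u`, for
`n ∈ ℕ` the following are equivalent:
(i) for `a, b ∈ [0, nu]` there is a sharp `p ∈ [0,u]` with `Ũ_p(a) ≤ Ũ_p(b)` and
`Ũ_{p'}(a) ≥ Ũ_{p'}(b)` (for `0 ≤ x ≤ nu`, `Ũ_p(x) = x ⊓ n•p`);
(ii) for `a ∈ [−nu, nu]` there is a sharp `p` with `Ũ_p(a) ≤ 0 ≤ Ũ_{p'}(a)`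
(for `−nu ≤ x ≤ nu`, `Ũ_p(x) = (x + nu) ⊓ 2n•p − n•p`). -/
theorem statement6 {G : Type*} [AddCommGroup G] [Lattice G]
    [CovariantClass G G (· + ·) (· ≤ ·)]
    (u : G) (hu : 0 ≤ u ∧ ∀ g : G, ∃ n : ℕ, g ≤ n • u) (n : ℕ) :
    (∀ a b : G, 0 ≤ a → a ≤ n • u → 0 ≤ b → b ≤ n • u →
      ∃ p : G, (0 ≤ p ∧ p ≤ u ∧ p ⊓ (u - p) = 0) ∧
        a ⊓ n • p ≤ b ⊓ n • p ∧ b ⊓ n • (u - p) ≤ a ⊓ n • (u - p)) ↔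
    (∀ a : G, -(n • u) ≤ a → a ≤ n • u →
      ∃ p : G, (0 ≤ p ∧ p ≤ u ∧ p ⊓ (u - p) = 0) ∧
        (a + n • u) ⊓ ((2 * n) • p) - n • p ≤ 0 ∧
        0 ≤ (a + n • u) ⊓ ((2 * n) • (u - p)) - n • (u - p)) :=
  statement6_general u n
end

section
/- Let (G, u) be an abelian interpolation group with order unit u. Then (G, u) satisfies general comparability if and only if the effect algebra [0, u], equipped with the compression base (U_p)_{p∈E_S} where E_S is the set of sharp elements and U_p(a) = a ∧ p, has the b-comparability property. -/
/- Common definitions: effect algebras, compression bases, spectrality -/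

attribute [local instance 0] Classical.propDecidable

universe u

namespace EffectAlgebra

/-- `u` is an order unit of the partially ordered abelian group `G`. -/
def OrderUnit {G : Type u} [AddCommGroup G] [PartialOrder G] (unit : G) : Prop :=
  0 ≤ unit ∧ ∀ g : G, ∃ n : ℕ, g ≤ n • unit

/-- the Riesz interpolation property. -/
def RieszInterp (G : Type u) [AddCommGroup G] [PartialOrder G] : Prop :=
  ∀ a b c d : G, a ≤ c → a ≤ d → b ≤ c → b ≤ d → ∃ x, a ≤ x ∧ b ≤ x ∧ x ≤ c ∧ x ≤ d

/-- `p ∈ [0,u]` is sharp: `p ∧ (u − p) = 0`. -/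
def SharpG {G : Type u} [AddCommGroup G] [PartialOrder G] (unit p : G) : Prop :=
  0 ≤ p ∧ p ≤ unit ∧ ∀ x : G, 0 ≤ x → x ≤ p → x ≤ unit - p → x = 0

/-- membership in the convex subgroup `G_p` generated by `p`. -/
def inGp {G : Type u} [AddCommGroup G] [PartialOrder G] (p g : G) : Prop :=
  ∃ n : ℕ, -(n • p) ≤ g ∧ g ≤ n • p

/-- `U` is the projection `Ũ_p` of `G` onto `G_p` with kernel `G_{p'}`. -/
def IsIdealProj {G : Type u} [AddCommGroup G] [PartialOrder G]
    (unit p : G) (U : G → G) : Prop :=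
  (∀ x y, U (x + y) = U x + U y) ∧ (∀ x y : G, x ≤ y → U x ≤ U y) ∧
    (∀ g, inGp p (U g)) ∧ (∀ g, inGp (unit - p) (g - U g)) ∧
    (∀ g, inGp p g → U g = g)

end EffectAlgebra

/-! Every `a ∈ [0, u]` is compatible with every sharp `p`, because `Ũ_p a + Ũ_{u-p} a = a`. Hence
the b-property and the commutation of any two elements hold automatically (`P` itself is a
Boolean algebra: `p ∧ q = Ũ_q p` is again sharp), and b-comparability of `e, f` says exactly
that `φ e, φ f` are comparable by a sharp element. It remains to extend comparability from
`[0, u]` to all of `G`. Comparing `x` with `y` means separating `g = x - y`: finding a sharp `p`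
with `Ũ_p g ≤ 0 ≤ Ũ_{u-p} g`. Separations glue: if `a` separates `Ũ_q g` and `b` separates
`Ũ_{u-q} g`, then `a ∧ q + b ∧ (u - q)` separates `g`. Elements of `[-u, u]` are differences of
elements of `[0, u]` by Riesz decomposition; interpolation peels one copy of `u` at a time off
`-m u ≤ g ≤ n u`, and the glued separations of the two compressions of `g` give induction on
`m` and `n`, which covers `G` because `u` is an order unit. -/

namespace EffectAlgebra

section OrderedGroup

variable {G : Type u} [AddCommGroup G] [PartialOrder G]

theorem inGp_zero (p : G) : inGp p 0 := ⟨0, by simp⟩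

theorem eq_zero_of_inGp_zero {x : G} (h : inGp 0 x) : x = 0 := by
  obtain ⟨n, h1, h2⟩ := h
  simp only [nsmul_zero, neg_zero] at h1 h2
  exact le_antisymm h2 h1

theorem sharpG_zero {u : G} (hu : 0 ≤ u) : SharpG u 0 :=
  ⟨le_rfl, hu, fun _ h0 h1 _ => le_antisymm h1 h0⟩

namespace IsIdealProj

variable {u p : G} {U : G → G}

theorem map_add (hU : IsIdealProj u p U) (x y : G) : U (x + y) = U x + U y := hU.1 x y

theorem map_zero (hU : IsIdealProj u p U) : U 0 = 0 := _root_.map_zero (AddMonoidHom.mk' U hU.1)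

theorem map_neg (hU : IsIdealProj u p U) (x : G) : U (-x) = -U x :=
  _root_.map_neg (AddMonoidHom.mk' U hU.1) x

theorem map_sub (hU : IsIdealProj u p U) (x y : G) : U (x - y) = U x - U y :=
  _root_.map_sub (AddMonoidHom.mk' U hU.1) x y

theorem map_nsmul (hU : IsIdealProj u p U) (n : ℕ) (x : G) : U (n • x) = n • U x :=
  _root_.map_nsmul (AddMonoidHom.mk' U hU.1) n x

theorem mono (hU : IsIdealProj u p U) {x y : G} (h : x ≤ y) : U x ≤ U y := hU.2.1 x y h

theorem nonneg (hU : IsIdealProj u p U) {x : G} (h : 0 ≤ x) : 0 ≤ U x :=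
  hU.map_zero ▸ hU.mono h

theorem apply_of_inGp (hU : IsIdealProj u p U) {g : G} (h : inGp p g) : U g = g :=
  hU.2.2.2.2 g h

theorem inGp_map (hU : IsIdealProj u p U) {q x : G} (h : inGp q x) : inGp (U q) (U x) := by
  obtain ⟨n, h1, h2⟩ := h
  refine ⟨n, ?_, ?_⟩
  · simpa only [hU.map_neg, hU.map_nsmul] using hU.mono h1
  · simpa only [hU.map_nsmul] using hU.mono h2

end IsIdealProj

variable [CovariantClass G G (· + ·) (· ≤ ·)]

theorem inGp_of_nonneg_of_le {p x : G} (h0 : 0 ≤ x) (h1 : x ≤ p) : inGp p x :=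
  ⟨1, by rw [one_nsmul]; exact ⟨(neg_nonpos.mpr (h0.trans h1)).trans h0, h1⟩⟩

theorem inGp.add {p x y : G} (hx : inGp p x) (hy : inGp p y) : inGp p (x + y) := by
  obtain ⟨n, hn1, hn2⟩ := hx
  obtain ⟨m, hm1, hm2⟩ := hy
  refine ⟨n + m, ?_, ?_⟩ <;> rw [add_nsmul]
  · rw [neg_add]; exact add_le_add hn1 hm1
  · exact add_le_add hn2 hm2

theorem inGp.neg {p x : G} (hx : inGp p x) : inGp p (-x) := by
  obtain ⟨n, hn1, hn2⟩ := hx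
  exact ⟨n, neg_le_neg_iff.mpr hn2, by simpa using neg_le_neg_iff.mpr hn1⟩

theorem inGp.sub {p x y : G} (hx : inGp p x) (hy : inGp p y) : inGp p (x - y) := by
  rw [sub_eq_add_neg]; exact hx.add hy.neg

theorem inGp.mono {p q x : G} (hpq : p ≤ q) (hx : inGp p x) : inGp q x := by
  obtain ⟨n, hn1, hn2⟩ := hx
  have hn := nsmul_le_nsmul_right hpq n
  exact ⟨n, (neg_le_neg_iff.mpr hn).trans hn1, hn2.trans hn⟩

theorem RieszInterp.decomposition (hG : RieszInterp G) {x y z : G}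
    (hz : 0 ≤ z) (hx : 0 ≤ x) (hy : 0 ≤ y) (hzxy : z ≤ x + y) :
    ∃ z₁ z₂ : G, z = z₁ + z₂ ∧ 0 ≤ z₁ ∧ z₁ ≤ x ∧ 0 ≤ z₂ ∧ z₂ ≤ y := by
  obtain ⟨w, hw0, hwzy, hwz, hwx⟩ := hG 0 (z - y) z x hz hx
    (sub_le_self z hy) (sub_le_iff_le_add.mpr hzxy)
  exact ⟨w, z - w, by abel, hw0, hwx, sub_nonneg.mpr hwz, by simpa using sub_le_sub_left hwzy z⟩

theorem RieszInterp.nsmul_disjoint (hG : RieszInterp G) {a b : G} (ha : 0 ≤ a)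
    (hab : ∀ y, 0 ≤ y → y ≤ a → y ≤ b → y = 0) (n : ℕ) :
    ∀ y, 0 ≤ y → y ≤ n • a → y ≤ b → y = 0 := by
  induction n with
  | zero => exact fun y h0 h1 _ => le_antisymm (by simpa using h1) h0
  | succ n ih =>
    intro y h0 h1 h2
    rw [succ_nsmul] at h1
    obtain ⟨z₁, z₂, rfl, h10, h1a, h20, h2a⟩ := hG.decomposition h0 (nsmul_nonneg ha n) ha h1
    have hz₁ : z₁ ≤ b := le_trans (le_add_of_nonneg_right h20) h2
    have hz₂ : z₂ ≤ b := le_trans (le_add_of_nonneg_left h10) h2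
    rw [ih z₁ h10 h1a hz₁, hab z₂ h20 h2a hz₂, add_zero]

theorem SharpG.compl {u p : G} (hp : SharpG u p) : SharpG u (u - p) :=
  ⟨sub_nonneg.mpr hp.2.1, sub_le_self u hp.1,
    fun x h0 h1 h2 => hp.2.2 x h0 (by rwa [sub_sub_cancel] at h2) h1⟩

theorem SharpG.eq_zero_of_inGp (hG : RieszInterp G) {u p x : G} (hp : SharpG u p)
    (h₁ : inGp p x) (h₂ : inGp (u - p) x) : x = 0 := by
  have nonpos : ∀ y : G, inGp p y → inGp (u - p) y → y ≤ 0 := by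
    rintro y ⟨n, -, hn⟩ ⟨m, -, hm⟩
    obtain ⟨z, hyz, hz0, hzn, hzm⟩ := hG y 0 (n • p) (m • (u - p)) hn hm
      (nsmul_nonneg hp.1 n) (nsmul_nonneg hp.compl.1 m)
    have disj_n := hG.nsmul_disjoint hp.1 hp.2.2 n
    have disj_nm := hG.nsmul_disjoint hp.compl.1 (fun y h0 h1 h2 => disj_n y h0 h2 h1) m
    exact (disj_nm z hz0 hzm hzn) ▸ hyz
  exact le_antisymm (nonpos x h₁ h₂) (neg_nonpos.mp (nonpos (-x) h₁.neg h₂.neg))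

namespace IsIdealProj

variable {u p : G} {U : G → G}

theorem apply_of_nonneg_of_le (hU : IsIdealProj u p U) {y : G} (hy₀ : 0 ≤ y) (hy : y ≤ p) :
    U y = y :=
  hU.apply_of_inGp (inGp_of_nonneg_of_le hy₀ hy)

theorem eq_of_inGp (hU : IsIdealProj u p U) (hG : RieszInterp G) (hp : SharpG u p)
    {g x : G} (h₁ : inGp p x) (h₂ : inGp (u - p) (g - x)) : U g = x := by
  have hd₁ : inGp p (U g - x) := (hU.2.2.1 g).sub h₁
  have hd₂ : inGp (u - p) (U g - x) := by
    rw [show U g - x = (g - x) - (g - U g) by abel]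
    exact h₂.sub (hU.2.2.2.1 g)
  exact sub_eq_zero.mp (hp.eq_zero_of_inGp hG hd₁ hd₂)

theorem apply_eq_zero (hU : IsIdealProj u p U) (hG : RieszInterp G) (hp : SharpG u p)
    {g : G} (h : inGp (u - p) g) : U g = 0 :=
  hU.eq_of_inGp hG hp (inGp_zero p) (by rwa [sub_zero])

theorem apply_unit (hU : IsIdealProj u p U) (hG : RieszInterp G) (hp : SharpG u p) :
    U u = p :=
  hU.eq_of_inGp hG hp (inGp_of_nonneg_of_le hp.1 le_rfl)
    (inGp_of_nonneg_of_le hp.compl.1 le_rfl)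

end IsIdealProj

section Projections

variable (hG : RieszInterp G) {u : G} {Ut : G → G → G}
  (hUt : ∀ p : G, SharpG u p → IsIdealProj u p (Ut p))
include hG hUt

theorem proj_compl_apply {p : G} (hp : SharpG u p) (g : G) : Ut (u - p) g = g - Ut p g :=
  (hUt _ hp.compl).eq_of_inGp hG hp.compl ((hUt p hp).2.2.2.1 g)
    (by rw [sub_sub_cancel, sub_sub_cancel]; exact (hUt p hp).2.2.1 g)

theorem proj_le_self {p x : G} (hp : SharpG u p) (hx : 0 ≤ x) : Ut p x ≤ x := by
  simpa [proj_compl_apply hG hUt hp] using (hUt _ hp.compl).nonneg hx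

theorem proj_le {p x : G} (hp : SharpG u p) (hx : x ≤ u) : Ut p x ≤ p :=
  ((hUt p hp).mono hx).trans_eq ((hUt p hp).apply_unit hG hp)

theorem proj_le_of_le {p c g : G} (hp : SharpG u p) (hc : 0 ≤ c) (h : g ≤ c) : Ut p g ≤ c :=
  ((hUt p hp).mono h).trans (proj_le_self hG hUt hp hc)

theorem neg_le_proj_of_neg_le {p c g : G} (hp : SharpG u p) (hc : 0 ≤ c) (h : -c ≤ g) :
    -c ≤ Ut p g := by
  have := (hUt p hp).mono h
  rw [(hUt p hp).map_neg] at this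
  exact (neg_le_neg_iff.mpr (proj_le_self hG hUt hp hc)).trans this

theorem proj_compl_eq_zero {p y : G} (hp : SharpG u p) (hy₀ : 0 ≤ y) (hy : y ≤ p) :
    Ut (u - p) y = 0 :=
  (hUt _ hp.compl).apply_eq_zero hG hp.compl
    (by rw [sub_sub_cancel]; exact inGp_of_nonneg_of_le hy₀ hy)

theorem proj_eq_zero_of_le_compl {p y : G} (hp : SharpG u p) (hy₀ : 0 ≤ y) (hy : y ≤ u - p) :
    Ut p y = 0 :=
  (hUt p hp).apply_eq_zero hG hp (inGp_of_nonneg_of_le hy₀ hy)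

theorem compl_glue {a b q : G} (ha : SharpG u a) (hb : SharpG u b) :
    u - (Ut a q + Ut b (u - q)) = Ut (u - a) q + Ut (u - b) (u - q) := by
  rw [proj_compl_apply hG hUt ha, proj_compl_apply hG hUt hb]
  abel

theorem proj_glue_left {a b q : G} (ha : SharpG u a) (hb : SharpG u b) (hq : SharpG u q) :
    Ut q (Ut a q + Ut b (u - q)) = Ut a q := by
  rw [(hUt q hq).map_add, (hUt q hq).apply_of_nonneg_of_le ((hUt a ha).nonneg hq.1)
    (proj_le_self hG hUt ha hq.1), proj_eq_zero_of_le_compl hG hUt hq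
    ((hUt b hb).nonneg hq.compl.1) (proj_le_self hG hUt hb hq.compl.1), add_zero]

theorem proj_compl_glue_right {a b q : G} (ha : SharpG u a) (hb : SharpG u b)
    (hq : SharpG u q) : Ut (u - q) (Ut a q + Ut b (u - q)) = Ut b (u - q) := by
  rw [(hUt _ hq.compl).map_add, proj_compl_eq_zero hG hUt hq ((hUt a ha).nonneg hq.1)
    (proj_le_self hG hUt ha hq.1), (hUt _ hq.compl).apply_of_nonneg_of_le
    ((hUt b hb).nonneg hq.compl.1) (proj_le_self hG hUt hb hq.compl.1), zero_add]

theorem sharpG_glue {a b q : G} (ha : SharpG u a) (hb : SharpG u b) (hq : SharpG u q) :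
    SharpG u (Ut a q + Ut b (u - q)) := by
  have hcompl : 0 ≤ u - (Ut a q + Ut b (u - q)) := by
    rw [compl_glue hG hUt ha hb]
    exact add_nonneg ((hUt _ ha.compl).nonneg hq.1) ((hUt _ hb.compl).nonneg hq.compl.1)
  refine ⟨add_nonneg ((hUt a ha).nonneg hq.1) ((hUt b hb).nonneg hq.compl.1),
    sub_nonneg.mp hcompl, ?_⟩
  intro x hx₀ hx hx'
  rw [compl_glue hG hUt ha hb] at hx'
  -- `Ũ_q x` lies below both `a` and `u - a`, and `Ũ_{u-q} x` below both `b` and `u - b`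
  have hq₀ : Ut q x = 0 := ha.2.2 _ ((hUt q hq).nonneg hx₀)
    (((hUt q hq).mono hx).trans ((proj_glue_left hG hUt ha hb hq).trans_le
      (proj_le hG hUt ha hq.2.1)))
    (((hUt q hq).mono hx').trans ((proj_glue_left hG hUt ha.compl hb.compl hq).trans_le
      (proj_le hG hUt ha.compl hq.2.1)))
  have hq₁ : Ut (u - q) x = 0 := hb.2.2 _ ((hUt _ hq.compl).nonneg hx₀)
    (((hUt _ hq.compl).mono hx).trans ((proj_compl_glue_right hG hUt ha hb hq).trans_le
      (proj_le hG hUt hb hq.compl.2.1)))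
    (((hUt _ hq.compl).mono hx').trans ((proj_compl_glue_right hG hUt ha.compl hb.compl hq).trans_le
      (proj_le hG hUt hb.compl hq.compl.2.1)))
  rw [proj_compl_apply hG hUt hq, hq₀, sub_zero] at hq₁
  exact hq₁

omit hG in
theorem inGp_glue {a b q : G} (ha : SharpG u a) (hb : SharpG u b) (hq : SharpG u q) (g : G) :
    inGp (Ut a q + Ut b (u - q)) (Ut a (Ut q g) + Ut b (Ut (u - q) g)) :=
  (((hUt a ha).inGp_map ((hUt q hq).2.2.1 g)).mono
      (le_add_of_nonneg_right ((hUt b hb).nonneg hq.compl.1))).add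
    (((hUt b hb).inGp_map ((hUt _ hq.compl).2.2.1 g)).mono
      (le_add_of_nonneg_left ((hUt a ha).nonneg hq.1)))

theorem proj_glue_apply {a b q : G} (ha : SharpG u a) (hb : SharpG u b) (hq : SharpG u q)
    (g : G) : Ut (Ut a q + Ut b (u - q)) g = Ut a (Ut q g) + Ut b (Ut (u - q) g) := by
  have hglue := sharpG_glue hG hUt ha hb hq
  refine (hUt _ hglue).eq_of_inGp hG hglue (inGp_glue hUt ha hb hq g) ?_
  have hrest : g - (Ut a (Ut q g) + Ut b (Ut (u - q) g))
      = Ut (u - a) (Ut q g) + Ut (u - b) (Ut (u - q) g) := by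
    rw [proj_compl_apply hG hUt ha, proj_compl_apply hG hUt hb, proj_compl_apply hG hUt hq]
    abel
  rw [compl_glue hG hUt ha hb, hrest]
  exact inGp_glue hUt ha.compl hb.compl hq g

theorem sharpG_proj {a q : G} (ha : SharpG u a) (hq : SharpG u q) : SharpG u (Ut a q) := by
  have h₀ := sharpG_zero (ha.1.trans ha.2.1)
  simpa [eq_zero_of_inGp_zero ((hUt 0 h₀).2.2.1 _)] using sharpG_glue hG hUt ha h₀ hq

end Projections

def SharpComparable (Ut : G → G → G) (u x y : G) : Prop :=
  ∃ p, SharpG u p ∧ Ut p x ≤ Ut p y ∧ Ut (u - p) y ≤ Ut (u - p) x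

def Separates (Ut : G → G → G) (u p g : G) : Prop :=
  SharpG u p ∧ Ut p g ≤ 0 ∧ 0 ≤ Ut (u - p) g

section Separation

variable {u : G} {Ut : G → G → G} (hUt : ∀ p : G, SharpG u p → IsIdealProj u p (Ut p))
include hUt

theorem separates_sub_iff {p x y : G} (hp : SharpG u p) :
    Separates Ut u p (x - y) ↔ SharpG u p ∧ Ut p x ≤ Ut p y ∧ Ut (u - p) y ≤ Ut (u - p) x := by
  rw [Separates, (hUt p hp).map_sub, (hUt _ hp.compl).map_sub, sub_nonpos, sub_nonneg]

theorem Separates.neg {p g : G} (h : Separates Ut u p g) : Separates Ut u (u - p) (-g) := by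
  refine ⟨h.1.compl, ?_, ?_⟩
  · rw [(hUt _ h.1.compl).map_neg]
    exact neg_nonpos.mpr h.2.2
  · rw [sub_sub_cancel, (hUt p h.1).map_neg]
    exact neg_nonneg.mpr h.2.1

variable (hG : RieszInterp G)
include hG

theorem separates_zero_of_nonneg (hu : 0 ≤ u) {g : G} (hg : 0 ≤ g) : Separates Ut u 0 g := by
  have h₀ := sharpG_zero hu
  have hzero : Ut 0 g = 0 := eq_zero_of_inGp_zero ((hUt 0 h₀).2.2.1 g)
  refine ⟨h₀, hzero.le, ?_⟩
  rwa [proj_compl_apply hG hUt h₀, hzero, sub_zero]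

theorem Separates.glue {a b q g : G} (hq : SharpG u q) (ha : Separates Ut u a (Ut q g))
    (hb : Separates Ut u b (Ut (u - q) g)) : Separates Ut u (Ut a q + Ut b (u - q)) g := by
  refine ⟨sharpG_glue hG hUt ha.1 hb.1 hq, ?_, ?_⟩
  · rw [proj_glue_apply hG hUt ha.1 hb.1 hq]
    exact add_nonpos ha.2.1 hb.2.1
  · rw [compl_glue hG hUt ha.1 hb.1, proj_glue_apply hG hUt ha.1.compl hb.1.compl hq]
    exact add_nonneg ha.2.2 hb.2.2

variable (hu : 0 ≤ u)
  (hIC : ∀ x y : G, 0 ≤ x → x ≤ u → 0 ≤ y → y ≤ u → SharpComparable Ut u x y)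
include hu hIC

theorem exists_separates_of_mem_Icc {g : G} (h₁ : -u ≤ g) (h₂ : g ≤ u) :
    ∃ p, Separates Ut u p g := by
  obtain ⟨z₁, z₂, hz, hz₁, hz₁u, hz₂, hz₂u⟩ :=
    hG.decomposition (neg_le_iff_add_nonneg.mp h₁) hu hu (add_le_add h₂ le_rfl)
  obtain ⟨p, hp, hcmp⟩ := hIC z₁ (u - z₂) hz₁ hz₁u (sub_nonneg.mpr hz₂u) (sub_le_self u hz₂)
  have hg : g = z₁ - (u - z₂) := by rw [sub_sub_eq_add_sub, ← hz, add_sub_cancel_right]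
  exact ⟨p, hg ▸ (separates_sub_iff hUt hp).mpr ⟨hp, hcmp⟩⟩

theorem exists_separates_of_neg_le_of_le_nsmul (n : ℕ) :
    ∀ g : G, -u ≤ g → g ≤ n • u → ∃ p, Separates Ut u p g := by
  induction n with
  | zero =>
    intro g h₁ h₂
    exact exists_separates_of_mem_Icc hUt hG hu hIC h₁ ((zero_nsmul u ▸ h₂).trans hu)
  | succ n ih =>
    intro g h₁ h₂
    obtain ⟨w, hw₀, hwg, hwu, hwg'⟩ := hG 0 (g - n • u) u (g + u) hu
      (neg_le_iff_add_nonneg.mp h₁) (sub_le_iff_le_add.mpr (succ_nsmul' u n ▸ h₂))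
      (sub_le_self g (nsmul_nonneg hu n) |>.trans (le_add_of_nonneg_right hu))
    obtain ⟨p₁, hp₁⟩ := ih (g - w) (neg_le_sub_iff_le_add.mpr hwg') (sub_le_comm.mp hwg)
    have hsplit : ∀ r, SharpG u r → Ut r g = Ut r w + Ut r (g - w) := fun r hr => by
      rw [← (hUt r hr).map_add, add_sub_cancel]
    have hlow : -u ≤ Ut p₁ g := neg_le_proj_of_neg_le hG hUt hp₁.1 hu h₁
    have hupp : Ut p₁ g ≤ u := by
      rw [hsplit p₁ hp₁.1]
      exact (add_le_of_nonpos_right hp₁.2.1).trans (proj_le_of_le hG hUt hp₁.1 hu hwu)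
    have hpos : 0 ≤ Ut (u - p₁) g := by
      rw [hsplit _ hp₁.1.compl]
      exact add_nonneg ((hUt _ hp₁.1.compl).nonneg hw₀) hp₁.2.2
    obtain ⟨a, ha⟩ := exists_separates_of_mem_Icc hUt hG hu hIC hlow hupp
    exact ⟨_, ha.glue hUt hG hp₁.1 (separates_zero_of_nonneg hUt hG hu hpos)⟩

theorem exists_separates_of_neg_nsmul_le_of_le (n : ℕ) {g : G} (h₁ : -(n • u) ≤ g)
    (h₂ : g ≤ u) : ∃ p, Separates Ut u p g := by
  obtain ⟨p, hp⟩ := exists_separates_of_neg_le_of_le_nsmul hUt hG hu hIC n (-g)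
    (neg_le_neg_iff.mpr h₂) (neg_le.mp h₁)
  exact ⟨u - p, neg_neg g ▸ hp.neg hUt⟩

theorem exists_separates_of_neg_nsmul_le_of_le_nsmul (m n : ℕ) :
    ∀ g : G, -(m • u) ≤ g → g ≤ n • u → ∃ p, Separates Ut u p g := by
  induction m with
  | zero =>
    intro g h₁ _
    exact ⟨0, separates_zero_of_nonneg hUt hG hu (by simpa using h₁)⟩
  | succ m ih =>
    intro g h₁ h₂
    obtain ⟨k, hgk, hmk, hkg, hkn⟩ := hG (g - u) (-(m • u)) (g + u) (n • u)
      (sub_le_self g hu |>.trans (le_add_of_nonneg_right hu))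
      (sub_le_self g hu |>.trans h₂)
      (neg_le_iff_add_nonneg.mpr
        (by simpa [succ_nsmul', add_assoc] using neg_le_iff_add_nonneg.mp h₁))
      ((neg_nonpos.mpr (nsmul_nonneg hu m)).trans (nsmul_nonneg hu n))
    obtain ⟨p₁, hp₁⟩ := ih k hmk hkn
    have hsplit : ∀ r, SharpG u r → Ut r g = Ut r (g - k) + Ut r k := fun r hr => by
      rw [← (hUt r hr).map_add, sub_add_cancel]
    have hlow₁ : -((m + 1) • u) ≤ Ut p₁ g :=
      neg_le_proj_of_neg_le hG hUt hp₁.1 (nsmul_nonneg hu _) h₁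
    have hupp₁ : Ut p₁ g ≤ u := by
      rw [hsplit p₁ hp₁.1]
      exact (add_le_of_nonpos_right hp₁.2.1).trans
        (proj_le_of_le hG hUt hp₁.1 hu (sub_le_comm.mp hgk))
    have hlow₂ : -u ≤ Ut (u - p₁) g := by
      rw [hsplit _ hp₁.1.compl]
      exact (neg_le_proj_of_neg_le hG hUt hp₁.1.compl hu
        (neg_le_sub_iff_le_add.mpr hkg)).trans (le_add_of_nonneg_right hp₁.2.2)
    have hupp₂ : Ut (u - p₁) g ≤ n • u := proj_le_of_le hG hUt hp₁.1.compl (nsmul_nonneg hu n) h₂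
    obtain ⟨a, ha⟩ := exists_separates_of_neg_nsmul_le_of_le hUt hG hu hIC (m + 1) hlow₁ hupp₁
    obtain ⟨b, hb⟩ := exists_separates_of_neg_le_of_le_nsmul hUt hG hu hIC n _ hlow₂ hupp₂
    exact ⟨_, ha.glue hUt hG hp₁.1 hb⟩

end Separation

theorem generalComparability_iff (hG : RieszInterp G) {u : G} (hu : OrderUnit u)
    {Ut : G → G → G} (hUt : ∀ p : G, SharpG u p → IsIdealProj u p (Ut p)) :
    (∀ x y : G, SharpComparable Ut u x y) ↔
      ∀ x y : G, 0 ≤ x → x ≤ u → 0 ≤ y → y ≤ u → SharpComparable Ut u x y := by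
  refine ⟨fun h x y _ _ _ _ => h x y, fun hIC x y => ?_⟩
  obtain ⟨m, hm⟩ := hu.2 (y - x)
  obtain ⟨n, hn⟩ := hu.2 (x - y)
  obtain ⟨p, hp⟩ := exists_separates_of_neg_nsmul_le_of_le_nsmul hUt hG hu.1 hIC m n (x - y)
    (by rwa [neg_le, neg_sub]) hn
  exact ⟨p, (separates_sub_iff hUt hp.1).mp hp⟩

end OrderedGroup

section UnitInterval

variable {G : Type u} [AddCommGroup G] [PartialOrder G]

structure IsUnitIntervalRep {E : Type u} (EA : EffectAlgebra E) (u : G) (φ : E → G) : Prop where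
  map_one : φ EA.one = u
  mem_Icc : ∀ a, 0 ≤ φ a ∧ φ a ≤ u
  exists_eq : ∀ g : G, 0 ≤ g → g ≤ u → ∃ a, φ a = g
  padd_eq_some_iff : ∀ a b c : E, EA.padd a b = some c ↔ φ a + φ b ≤ u ∧ φ c = φ a + φ b

namespace IsUnitIntervalRep

variable {E : Type u} {EA : EffectAlgebra E} {u : G} {φ : E → G} (hφ : IsUnitIntervalRep EA u φ)
include hφ

theorem map_compl (a : E) : φ (EA.compl a) = u - φ a := by
  have h := ((hφ.padd_eq_some_iff _ _ _).mp (EA.orth_exists a).choose_spec).2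
  rw [hφ.map_one] at h
  exact eq_sub_of_add_eq' h.symm

variable [CovariantClass G G (· + ·) (· ≤ ·)]

theorem exists_padd_eq {a b : E} (h : φ a + φ b ≤ u) :
    ∃ c, EA.padd a b = some c ∧ φ c = φ a + φ b := by
  obtain ⟨c, hc⟩ := hφ.exists_eq _ (add_nonneg (hφ.mem_Icc a).1 (hφ.mem_Icc b).1) h
  exact ⟨c, (hφ.padd_eq_some_iff a b c).mpr ⟨h, hc⟩, hc⟩

theorem le_iff {a b : E} : EA.le a b ↔ φ a ≤ φ b := by
  constructor
  · rintro ⟨c, hc⟩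
    rw [((hφ.padd_eq_some_iff a c b).mp hc).2]
    exact le_add_of_nonneg_right (hφ.mem_Icc c).1
  · intro h
    obtain ⟨c, hc⟩ := hφ.exists_eq (φ b - φ a) (sub_nonneg.mpr h)
      ((sub_le_self _ (hφ.mem_Icc a).1).trans (hφ.mem_Icc b).2)
    refine ⟨c, (hφ.padd_eq_some_iff a c b).mpr ⟨?_, ?_⟩⟩ <;> rw [hc, add_sub_cancel]
    exact (hφ.mem_Icc b).2

end IsUnitIntervalRep

section CompressionBase

variable {E : Type u} {EA : EffectAlgebra E} {u : G} {φ : E → G} {Ut : G → G → G}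
  {CB : CompressionBase EA}

theorem exists_mem_P_of_sharpG (hφ : IsUnitIntervalRep EA u φ)
    (hP : ∀ p : E, p ∈ CB.P ↔ SharpG u (φ p)) {g : G} (hg : SharpG u g) :
    ∃ p ∈ CB.P, φ p = g := by
  obtain ⟨p, rfl⟩ := hφ.exists_eq g hg.1 hg.2.1
  exact ⟨p, (hP p).mpr hg, rfl⟩

theorem map_J_compl (hφ : IsUnitIntervalRep EA u φ)
    (hJ : ∀ p ∈ CB.P, ∀ a : E, φ (CB.J p a) = Ut (φ p) (φ a)) {p : E} (hp : p ∈ CB.P) (a : E) :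
    φ (CB.J (EA.compl p) a) = Ut (u - φ p) (φ a) := by
  rw [hJ _ (CB.sub.2.2.1 p hp), hφ.map_compl]

variable [CovariantClass G G (· + ·) (· ≤ ·)]
  (hG : RieszInterp G) (hUt : ∀ p : G, SharpG u p → IsIdealProj u p (Ut p))
  (hφ : IsUnitIntervalRep EA u φ) (hP : ∀ p : E, p ∈ CB.P ↔ SharpG u (φ p))
include hG hUt hφ hP

theorem exists_mackey_decomposition {p q : E} (hp : p ∈ CB.P) (hq : q ∈ CB.P) :
    ∃ p₁ ∈ CB.P, ∃ q₁ ∈ CB.P, ∃ c ∈ CB.P, ∃ d e, EA.padd p₁ q₁ = some d ∧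
      EA.padd d c = some e ∧ EA.padd p₁ c = some p ∧ EA.padd q₁ c = some q := by
  have hp' := (hP p).mp hp
  have hq' := (hP q).mp hq
  -- `c = p ∧ q`, `p₁ = p ∧ (u - q)`, `q₁ = q ∧ (u - p)`
  obtain ⟨c, hc, hcφ⟩ := exists_mem_P_of_sharpG hφ hP (sharpG_proj hG hUt hq' hp')
  obtain ⟨p₁, hp₁, hp₁φ⟩ := exists_mem_P_of_sharpG hφ hP (sharpG_proj hG hUt hq'.compl hp')
  obtain ⟨q₁, hq₁, hq₁φ⟩ := exists_mem_P_of_sharpG hφ hP (sharpG_proj hG hUt hq' hp'.compl)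
  have hpc : φ p₁ + φ c = φ p := by
    rw [hp₁φ, hcφ, proj_compl_apply hG hUt hq', sub_add_cancel]
  have hqc : φ q₁ + φ c = φ q := by
    rw [hq₁φ, hcφ, ← (hUt _ hq').map_add, sub_add_cancel, (hUt _ hq').apply_unit hG hq']
  have hsum : φ p₁ + φ q₁ + φ c ≤ u := by
    rw [add_assoc, hqc, ← le_sub_iff_add_le, hp₁φ]
    exact proj_le hG hUt hq'.compl (hφ.mem_Icc p).2
  obtain ⟨d, hd, hdφ⟩ :=
    hφ.exists_padd_eq ((le_add_of_nonneg_right (hφ.mem_Icc c).1).trans hsum)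
  obtain ⟨e, he, -⟩ := hφ.exists_padd_eq (hdφ ▸ hsum)
  refine ⟨p₁, hp₁, q₁, hq₁, c, hc, d, e, hd, he, ?_, ?_⟩
  · exact (hφ.padd_eq_some_iff _ _ _).mpr ⟨hpc ▸ (hφ.mem_Icc p).2, hpc.symm⟩
  · exact (hφ.padd_eq_some_iff _ _ _).mpr ⟨hqc ▸ (hφ.mem_Icc q).2, hqc.symm⟩

theorem commuteEl (e f : E) : CommuteEl EA CB e f := by
  intro p hp q hq
  obtain ⟨p₁, -, q₁, -, c, -, d, e, h⟩ := exists_mackey_decomposition hG hUt hφ hP hp.1.1 hq.1.1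
  exact ⟨p₁, q₁, c, d, e, h⟩

variable (hJ : ∀ p ∈ CB.P, ∀ a : E, φ (CB.J p a) = Ut (φ p) (φ a))
include hJ

theorem inC_of_mem {p : E} (hp : p ∈ CB.P) (a : E) : inC EA CB a p := by
  have hsum : φ (CB.J p a) + φ (CB.J (EA.compl p) a) = φ a := by
    rw [hJ p hp, map_J_compl hφ hJ hp, proj_compl_apply hG hUt ((hP p).mp hp)]
    abel
  exact (hφ.padd_eq_some_iff _ _ _).mpr ⟨hsum ▸ (hφ.mem_Icc a).2, hsum.symm⟩

theorem bProperty : BProperty EA CB := by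
  refine fun a => ⟨CB.P, ⟨subset_rfl, CB.sub, fun p hp q hq => ?_⟩, fun p hp => ?_⟩
  · exact exists_mackey_decomposition hG hUt hφ hP hp hq
  · exact ⟨fun _ b _ => inC_of_mem hG hUt hφ hP hJ hp b, fun _ => inC_of_mem hG hUt hφ hP hJ hp a⟩

theorem mem_Ple_iff {p e f : E} : p ∈ Ple EA CB e f ↔ p ∈ CB.P ∧
    Ut (φ p) (φ e) ≤ Ut (φ p) (φ f) ∧ Ut (u - φ p) (φ f) ≤ Ut (u - φ p) (φ e) := by
  refine ⟨fun ⟨hp, h₁, h₂⟩ => ?_, fun ⟨hp, h₁, h₂⟩ => ?_⟩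
  · rw [hφ.le_iff, hJ p hp.1, hJ p hp.1] at h₁
    rw [hφ.le_iff, map_J_compl hφ hJ hp.1, map_J_compl hφ hJ hp.1] at h₂
    exact ⟨hp.1, h₁, h₂⟩
  · refine ⟨⟨hp, fun a _ => inC_of_mem hG hUt hφ hP hJ hp a⟩, ?_, ?_⟩
    · rwa [hφ.le_iff, hJ p hp, hJ p hp]
    · rwa [hφ.le_iff, map_J_compl hφ hJ hp, map_J_compl hφ hJ hp]

theorem bComparability_iff : BComparability EA CB ↔
    ∀ x y : G, 0 ≤ x → x ≤ u → 0 ≤ y → y ≤ u → SharpComparable Ut u x y := by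
  constructor
  · intro ⟨_, hcmp⟩ x y hx₀ hx₁ hy₀ hy₁
    obtain ⟨a, rfl⟩ := hφ.exists_eq x hx₀ hx₁
    obtain ⟨b, rfl⟩ := hφ.exists_eq y hy₀ hy₁
    obtain ⟨p, hp⟩ := hcmp a b (commuteEl hG hUt hφ hP a b)
    obtain ⟨hpP, h⟩ := (mem_Ple_iff hG hUt hφ hP hJ).mp hp
    exact ⟨φ p, (hP p).mp hpP, h⟩
  · intro hIC
    refine ⟨bProperty hG hUt hφ hP hJ, fun e f _ => ?_⟩
    obtain ⟨g, hg, h⟩ := hIC (φ e) (φ f) (hφ.mem_Icc e).1 (hφ.mem_Icc e).2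
      (hφ.mem_Icc f).1 (hφ.mem_Icc f).2
    obtain ⟨p, hpP, rfl⟩ := exists_mem_P_of_sharpG hφ hP hg
    exact ⟨p, (mem_Ple_iff hG hUt hφ hP hJ).mpr ⟨hpP, h⟩⟩

end CompressionBase

end UnitInterval

end EffectAlgebra

open EffectAlgebra in
theorem statement7_general {G : Type u} [AddCommGroup G] [PartialOrder G]
    [CovariantClass G G (· + ·) (· ≤ ·)]
    (hG : RieszInterp G) (u : G) (hu : OrderUnit u)
    {E : Type u} (EA : EffectAlgebra E) (φ : E → G)
    (hφ1 : φ EA.one = u)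
    (hmem : ∀ a : E, 0 ≤ φ a ∧ φ a ≤ u)
    (hsurj : ∀ g : G, 0 ≤ g → g ≤ u → ∃ a : E, φ a = g)
    (hpadd : ∀ a b : E, ∀ c : E,
      (EA.padd a b = some c ↔ φ a + φ b ≤ u ∧ φ c = φ a + φ b))
    (Ut : G → G → G) (hUt : ∀ p : G, SharpG u p → IsIdealProj u p (Ut p))
    (CB : CompressionBase EA)
    (hP : ∀ p : E, p ∈ CB.P ↔ SharpG u (φ p))
    (hJ : ∀ p ∈ CB.P, ∀ a : E, φ (CB.J p a) = Ut (φ p) (φ a)) :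
    (∀ x y : G, ∃ p : G, SharpG u p ∧ Ut p x ≤ Ut p y ∧ Ut (u - p) y ≤ Ut (u - p) x) ↔
      BComparability EA CB :=
  (generalComparability_iff hG hu hUt).trans
    (bComparability_iff hG hUt ⟨hφ1, hmem, hsurj, hpadd⟩ hP hJ).symm

open EffectAlgebra in
/-- an abelian interpolation group `(G,u)` with order unit satisfies
general comparability iff the effect algebra `[0,u]` (here represented by an
isomorphism `φ : E → [0,u] ⊆ G`), with the compression base `(U_p)_{p∈E_S}` of the
restrictions of the projections `Ũ_p` for sharp `p`, has the b-comparability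
property. -/
theorem statement7 {G : Type u} [AddCommGroup G] [PartialOrder G]
    [CovariantClass G G (· + ·) (· ≤ ·)]
    (hG : RieszInterp G) (u : G) (hu : OrderUnit u)
    {E : Type u} (EA : EffectAlgebra E) (φ : E → G)
    (hφ0 : φ EA.zero = 0) (hφ1 : φ EA.one = u)
    (hmem : ∀ a : E, 0 ≤ φ a ∧ φ a ≤ u)
    (hinj : Function.Injective φ)
    (hsurj : ∀ g : G, 0 ≤ g → g ≤ u → ∃ a : E, φ a = g)
    (hpadd : ∀ a b : E, ∀ c : E,
      (EA.padd a b = some c ↔ φ a + φ b ≤ u ∧ φ c = φ a + φ b))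
    (Ut : G → G → G) (hUt : ∀ p : G, SharpG u p → IsIdealProj u p (Ut p))
    (CB : CompressionBase EA)
    (hP : ∀ p : E, p ∈ CB.P ↔ SharpG u (φ p))
    (hJ : ∀ p ∈ CB.P, ∀ a : E, φ (CB.J p a) = Ut (φ p) (φ a)) :
    (∀ x y : G, ∃ p : G, SharpG u p ∧ Ut p x ≤ Ut p y ∧ Ut (u - p) y ≤ Ut (u - p) x) ↔
      BComparability EA CB :=
  statement7_general hG u hu EA φ hφ1 hmem hsurj hpadd Ut hUt CB hP hJ
end
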